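/- Let k be an integer with 0 ≤ k ≤ m-1, and define a = (γ^(2m+3k+2) + γ^(m+6k+4) + 1)/(3γ^(m+3k+2)), b = (γ^(2m) + γ^(m+6k+4) + γ^(3k+2))/(3γ^(m+3k+2)), c = (γ^(6k+4) + γ^(3k+2) + 1)/(3γ^(3k+2)) in F_q, and let g(x) = a·x^(2m+1) + b·x^(m+1) + c·x. Then for every integer i with 0 ≤ i ≤ m-1 one has g(γ^(3i+1)) = γ^(3i+1). -/

import Mathlib

/-!
Put `ω = γ^m` and `t = γ^(3k+2)`. Since `γ` has order `q - 1 = 3m`, `ω` is a primitive cube root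
of unity, and every `x = γ^(3i+1)` satisfies `x^m = ω`. Hence `g x = (a ω² + b ω + c) x`, and
rewritten in `ω` and `t` the identity `a ω² + b ω + c = 1` follows from `ω² + ω + 1 = 0` alone.
-/

theorem IsPrimitiveRoot.sq_add_self_add_one {R : Type*} [CommRing R] [IsDomain R] {ω : R}
    (hω : IsPrimitiveRoot ω 3) : ω ^ 2 + ω + 1 = 0 := by
  have := hω.geom_sum_eq_zero (by norm_num)
  simp only [Finset.sum_range_succ, Finset.sum_range_zero] at this
  linear_combination this

theorem IsPrimitiveRoot.three_ne_zero {F : Type*} [Field F] {ω : F} (hω : IsPrimitiveRoot ω 3) :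
    (3 : F) ≠ 0 := by
  simpa using (hω.neZero' (R := F)).out

theorem isPrimitiveRoot_of_forall_mem_zpowers {F : Type*} [Field F] [Fintype F] {γ : Fˣ}
    (hγ : ∀ x : Fˣ, x ∈ Subgroup.zpowers γ) : IsPrimitiveRoot (γ : F) (Fintype.card F - 1) := by
  convert IsPrimitiveRoot.orderOf (γ : F)
  rw [orderOf_units, orderOf_eq_card_of_forall_mem_zpowers hγ, Nat.card_units,
    Nat.card_eq_fintype_card]

theorem trinomial_apply_eq_self_of_pow_eq {F : Type*} [Field F] {ω t x : F} {m : ℕ}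
    (hω : IsPrimitiveRoot ω 3) (ht : t ≠ 0) (hx : x ^ m = ω) :
    (ω ^ 2 * t + ω * t ^ 2 + 1) / (3 * (ω * t)) * x ^ (2 * m + 1)
      + (ω ^ 2 + ω * t ^ 2 + t) / (3 * (ω * t)) * x ^ (m + 1)
      + (t ^ 2 + t + 1) / (3 * t) * x = x := by
  have h3 := hω.three_ne_zero
  have hω0 := hω.ne_zero (by norm_num)
  rw [pow_add, pow_add, pow_mul', hx, pow_one]
  field_simp
  linear_combination (ω * t + 1 + t ^ 2 - t) * x * hω.sq_add_self_add_one

theorem stmt5_general (q m : ℕ) (F : Type*) [Field F] [Fintype F]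
    (hq : Fintype.card F = q) (hq3 : q % 3 = 1)
    (hm : m = (q - 1) / 3)
    (γ : Fˣ) (hγ : ∀ x : Fˣ, x ∈ Subgroup.zpowers γ)
    (k : ℕ)
    (a b c : F)
    (ha : a = ((γ : F)^(2*m+3*k+2) + (γ : F)^(m+6*k+4) + 1) / (3 * (γ : F)^(m+3*k+2)))
    (hb : b = ((γ : F)^(2*m) + (γ : F)^(m+6*k+4) + (γ : F)^(3*k+2)) / (3 * (γ : F)^(m+3*k+2)))
    (hc : c = ((γ : F)^(6*k+4) + (γ : F)^(3*k+2) + 1) / (3 * (γ : F)^(3*k+2)))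
    (g : F → F)
    (hg : ∀ x : F, g x = a * x^(2*m+1) + b * x^(m+1) + c * x) :
    ∀ i : ℕ, i ≤ m - 1 → g ((γ : F)^(3*i+1)) = (γ : F)^(3*i+1) := by
  intro i _
  have hq1 : 1 < q := hq ▸ Fintype.one_lt_card
  have hγ3m : IsPrimitiveRoot (γ : F) (m * 3) := by
    convert isPrimitiveRoot_of_forall_mem_zpowers hγ using 1
    omega
  have hω : IsPrimitiveRoot ((γ : F) ^ m) 3 := hγ3m.pow (by omega) rfl
  have hx : ((γ : F) ^ (3 * i + 1)) ^ m = (γ : F) ^ m := by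
    rw [← pow_mul, show (3 * i + 1) * m = m * 3 * i + m by ring, pow_add, pow_mul,
      hγ3m.pow_eq_one, one_pow, one_mul]
  rw [hg, ha, hb, hc]
  convert trinomial_apply_eq_self_of_pow_eq hω (pow_ne_zero (3 * k + 2) γ.ne_zero) hx using 5 <;>
    ring

theorem stmt5 (q m : ℕ) (F : Type*) [Field F] [Fintype F]
    (hq : Fintype.card F = q) (hodd : Odd q) (hq3 : q % 3 = 1)
    (hm : m = (q - 1) / 3)
    (γ : Fˣ) (hγ : ∀ x : Fˣ, x ∈ Subgroup.zpowers γ)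
    (k : ℕ) (hk : k ≤ m - 1)
    (a b c : F)
    (ha : a = ((γ : F)^(2*m+3*k+2) + (γ : F)^(m+6*k+4) + 1) / (3 * (γ : F)^(m+3*k+2)))
    (hb : b = ((γ : F)^(2*m) + (γ : F)^(m+6*k+4) + (γ : F)^(3*k+2)) / (3 * (γ : F)^(m+3*k+2)))
    (hc : c = ((γ : F)^(6*k+4) + (γ : F)^(3*k+2) + 1) / (3 * (γ : F)^(3*k+2)))
    (g : F → F)
    (hg : ∀ x : F, g x = a * x^(2*m+1) + b * x^(m+1) + c * x) :
    ∀ i : ℕ, i ≤ m - 1 → g ((γ : F)^(3*i+1)) = (γ : F)^(3*i+1) :=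
  stmt5_general q m F hq hq3 hm γ hγ k a b c ha hb hc g hg
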